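/- arXiv:2212.04893 — 4 statements merged into one kernel-verified Lean document; each statement's English description precedes it below -/
import Mathlib

section
/- Under the modular setup below, for every ε > 0 and every Λ > 0 one has μ( { (h, h̄) : |h − A| < ε and h̄ > Λ } ) > 0, and likewise μ( { (h, h̄) : h > Λ and |h̄ − A| < ε } ) > 0. (In CFT language: there is a family of Virasoro primaries with h → (c−1)/24 and h̄ → ∞, and vice versa.) -/
open MeasureTheory

/-- The reduced partition function
`Z̃(β, β̄) = (1-e^{-β})(1-e^{-β̄}) + ∫ e^{-βh - β̄h̄} dμ(h,h̄)`. -/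
noncomputable def Ztil (μ : Measure (ℝ × ℝ)) (β βb : ℝ) : ℝ :=
  (1 - Real.exp (-β)) * (1 - Real.exp (-βb)) +
    ∫ p : ℝ × ℝ, Real.exp (-β * p.1 - βb * p.2) ∂μ

/-- The modular crossing kernel
`K(β, β̄) = (2π/√(ββ̄)) exp(4π²A/β + 4π²A/β̄ - Aβ - Aβ̄)`. -/
noncomputable def Kker (A β βb : ℝ) : ℝ :=
  2 * Real.pi / Real.sqrt (β * βb) *
    Real.exp (4 * Real.pi ^ 2 * A / β + 4 * Real.pi ^ 2 * A / βb - A * β - A * βb)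

/-!
Suppose the strip `{|h - A| < ε, h̄ > Λ}` is `μ`-null. As `β̄ → 0` the crossed channel is
dominated by its vacuum, so the primary integral `∫ e^{-βh - β̄h̄} dμ`, divided by the
divergent `β̄`-factor of the crossing kernel, tends to
`L(β) = 2π e^{4π²A/β - Aβ} (1 - e^{-4π²/β}) / √β` (`dualVacuum`).
Off the strip every state has `h ≤ A - ε`, `h ≥ A + ε` or `h̄ ≤ Λ`. The last ones contribute
a bounded amount, which the divergent kernel kills, and comparing `e^{-βh}` with `e^{-2βh}`
resp. `e^{-h}` on the first two gives in the limit
`L(β) ≤ e^{β(A-ε)} L(2β) + e^{-(β-1)(A+ε)} L(1) = O(e^{-(A+ε)β})`,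
which contradicts `L(β) ≳ β⁻² e^{-Aβ}`. The second statement is the first one for the
reflected measure.
-/

open Real Filter Topology

noncomputable def kernelFactor (A β : ℝ) : ℝ :=
  exp (4 * π ^ 2 * A / β - A * β) / √β

noncomputable def primaryPart (μ : Measure (ℝ × ℝ)) (β βb : ℝ) : ℝ :=
  ∫ p : ℝ × ℝ, exp (-β * p.1 - βb * p.2) ∂μ

noncomputable def dualVacuum (A β : ℝ) : ℝ :=
  2 * π * kernelFactor A β * (1 - exp (-(4 * π ^ 2 / β)))

lemma Ztil_eq_add_primaryPart (μ : Measure (ℝ × ℝ)) (β βb : ℝ) :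
    Ztil μ β βb = (1 - exp (-β)) * (1 - exp (-βb)) + primaryPart μ β βb := rfl

lemma kernelFactor_pos (A : ℝ) {β : ℝ} (hβ : 0 < β) : 0 < kernelFactor A β := by
  unfold kernelFactor; positivity

lemma Kker_eq_mul_kernelFactor (A : ℝ) {β : ℝ} (hβ : 0 ≤ β) (βb : ℝ) :
    Kker A β βb = 2 * π * kernelFactor A β * kernelFactor A βb := by
  rw [Kker, kernelFactor, kernelFactor, sqrt_mul hβ,
    show 4 * π ^ 2 * A / β + 4 * π ^ 2 * A / βb - A * β - A * βb
      = (4 * π ^ 2 * A / β - A * β) + (4 * π ^ 2 * A / βb - A * βb) by ring, exp_add]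
  ring

lemma Kker_comm (A β βb : ℝ) : Kker A β βb = Kker A βb β := by
  unfold Kker; ring_nf

lemma tendsto_const_div_nhdsGT_zero {c : ℝ} (hc : 0 < c) :
    Tendsto (fun x : ℝ => c / x) (𝓝[>] 0) atTop :=
  (tendsto_inv_nhdsGT_zero.const_mul_atTop hc).congr fun x => (div_eq_mul_inv c x).symm

lemma tendsto_kernelFactor_nhdsGT_zero {A : ℝ} (hA : 0 < A) :
    Tendsto (kernelFactor A) (𝓝[>] 0) atTop := by
  have hlin : Tendsto (fun β : ℝ => -(A * β)) (𝓝[>] 0) (𝓝 (-(A * 0))) :=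
    ((continuous_const.mul continuous_id).neg.tendsto 0).mono_left nhdsWithin_le_nhds
  have hexp : Tendsto (fun β => exp (4 * π ^ 2 * A / β - A * β)) (𝓝[>] 0) atTop :=
    tendsto_exp_atTop.comp ((tendsto_const_div_nhdsGT_zero (by positivity)).atTop_add hlin)
  have hsqrt : Tendsto (fun β : ℝ => (√β)⁻¹) (𝓝[>] 0) atTop := by
    refine tendsto_inv_nhdsGT_zero.comp (tendsto_nhdsWithin_iff.2 ⟨?_, ?_⟩)
    · simpa using (continuous_sqrt.tendsto 0).mono_left nhdsWithin_le_nhds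
    · filter_upwards [self_mem_nhdsWithin] with β hβ using sqrt_pos.2 hβ
  exact (hexp.atTop_mul_atTop₀ hsqrt).congr fun β => (div_eq_mul_inv _ _).symm

lemma tendsto_primaryPart_atTop {μ : Measure (ℝ × ℝ)} {β : ℝ} (hpos : ∀ᵐ p ∂μ, 0 < p.2)
    (hint : Integrable (fun p : ℝ × ℝ => exp (-β * p.1 - 1 * p.2)) μ) :
    Tendsto (primaryPart μ β) atTop (𝓝 0) := by
  have hmeas : ∀ βb : ℝ,
      AEStronglyMeasurable (fun p : ℝ × ℝ => exp (-β * p.1 - βb * p.2)) μ :=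
    fun βb => (by fun_prop : Continuous _).aestronglyMeasurable
  have hbound : ∀ᶠ βb in atTop,
      ∀ᵐ p ∂μ, ‖exp (-β * p.1 - βb * p.2)‖ ≤ exp (-β * p.1 - 1 * p.2) := by
    filter_upwards [eventually_ge_atTop 1] with βb hβb
    filter_upwards [hpos] with p hp
    rw [norm_of_nonneg (exp_pos _).le]
    exact exp_le_exp.2 (by nlinarith)
  have hlim : ∀ᵐ p ∂μ, Tendsto (fun βb => exp (-β * p.1 - βb * p.2)) atTop (𝓝 0) := by
    filter_upwards [hpos] with p hp
    refine tendsto_exp_atBot.comp ((tendsto_atBot_add_const_left _ (-β * p.1)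
      (tendsto_neg_atTop_atBot.comp (tendsto_id.atTop_mul_const hp))).congr fun βb => ?_)
    simp only [Function.comp_apply, id]
    ring
  have := tendsto_integral_filter_of_dominated_convergence _ (Eventually.of_forall hmeas)
    hbound hint hlim
  rwa [integral_zero] at this

lemma tendsto_primaryPart_div_kernelFactor {A : ℝ} (hA : 0 < A) {μ : Measure (ℝ × ℝ)}
    (hpos : ∀ᵐ p ∂μ, 0 < p.2)
    (hint : ∀ β βb : ℝ, 0 < β → 0 < βb →
      Integrable (fun p : ℝ × ℝ => exp (-β * p.1 - βb * p.2)) μ)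
    (hmod : ∀ β βb : ℝ, 0 < β → 0 < βb →
      Ztil μ β βb = Kker A β βb * Ztil μ (4 * π ^ 2 / β) (4 * π ^ 2 / βb))
    {β : ℝ} (hβ : 0 < β) :
    Tendsto (fun βb => primaryPart μ β βb / kernelFactor A βb) (𝓝[>] 0)
      (𝓝 (dualVacuum A β)) := by
  have hβ' : 0 < 4 * π ^ 2 / β := by positivity
  have hZdual : Tendsto (Ztil μ (4 * π ^ 2 / β)) atTop
      (𝓝 ((1 - exp (-(4 * π ^ 2 / β))) * (1 - 0) + 0)) :=
    ((tendsto_const_nhds.sub tendsto_exp_neg_atTop_nhds_zero).const_mul _).add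
      (tendsto_primaryPart_atTop hpos (hint _ 1 hβ' one_pos))
  have hvac : Tendsto (fun βb : ℝ => (1 - exp (-β)) * (1 - exp (-βb))) (𝓝[>] 0)
      (𝓝 ((1 - exp (-β)) * (1 - exp (-0)))) :=
    ((by fun_prop : Continuous fun βb : ℝ => (1 - exp (-β)) * (1 - exp (-βb))).tendsto
      0).mono_left nhdsWithin_le_nhds
  have hdual := hZdual.comp (tendsto_const_div_nhdsGT_zero (c := 4 * π ^ 2) (by positivity))
  have hlim := (hdual.const_mul (2 * π * kernelFactor A β)).sub
    (hvac.div_atTop (tendsto_kernelFactor_nhdsGT_zero hA))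
  rw [show 2 * π * kernelFactor A β * ((1 - exp (-(4 * π ^ 2 / β))) * (1 - 0) + 0) - 0
    = dualVacuum A β by rw [dualVacuum]; ring] at hlim
  refine hlim.congr' ?_
  filter_upwards [self_mem_nhdsWithin] with βb hβb
  have h := hmod β βb hβ hβb
  rw [Ztil_eq_add_primaryPart μ β βb, Kker_eq_mul_kernelFactor A hβ.le] at h
  have hk := (kernelFactor_pos A hβb).ne'
  simp only [Function.comp_apply]
  rw [eq_div_iff hk, sub_mul, div_mul_cancel₀ _ hk]
  linear_combination -h

lemma exp_le_light_add_band_add_heavy {A ε Λ h hb β₀ β β' βb : ℝ} (hh : 0 ≤ h) (hhb : 0 ≤ hb)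
    (hstrip : ¬(|h - A| < ε ∧ Λ < hb)) (hβ₀ : 0 ≤ β₀) (hβ₀β : β₀ ≤ β) (hββ' : β ≤ β')
    (hβb : 0 ≤ βb) :
    exp (-β * h - βb * hb) ≤ exp ((β' - β) * (A - ε)) * exp (-β' * h - βb * hb)
      + exp (β₀ * Λ) * exp (-β₀ * h - β₀ * hb)
      + exp (-(β - β₀) * (A + ε)) * exp (-β₀ * h - βb * hb) := by
  simp only [← exp_add]
  have h₁ := exp_pos ((β' - β) * (A - ε) + (-β' * h - βb * hb))
  have h₂ := exp_pos (β₀ * Λ + (-β₀ * h - β₀ * hb))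
  have h₃ := exp_pos (-(β - β₀) * (A + ε) + (-β₀ * h - βb * hb))
  rcases le_or_gt h (A - ε) with hlight | hlight
  · have := exp_le_exp.2
      (show -β * h - βb * hb ≤ (β' - β) * (A - ε) + (-β' * h - βb * hb) by nlinarith)
    linarith
  rcases le_or_gt (A + ε) h with hheavy | hheavy
  · have := exp_le_exp.2
      (show -β * h - βb * hb ≤ -(β - β₀) * (A + ε) + (-β₀ * h - βb * hb) by nlinarith)
    linarith
  have hband : hb ≤ Λ := not_lt.1 fun hΛ => hstrip ⟨abs_lt.2 ⟨by linarith, by linarith⟩, hΛ⟩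
  have := exp_le_exp.2
    (show -β * h - βb * hb ≤ β₀ * Λ + (-β₀ * h - β₀ * hb) by nlinarith)
  linarith

lemma primaryPart_le_light_add_band_add_heavy {A ε Λ : ℝ} {μ : Measure (ℝ × ℝ)}
    (hpos : ∀ᵐ p ∂μ, 0 ≤ p.1 ∧ 0 ≤ p.2)
    (hint : ∀ β βb : ℝ, 0 < β → 0 < βb →
      Integrable (fun p : ℝ × ℝ => exp (-β * p.1 - βb * p.2)) μ)
    (hstrip : μ {p : ℝ × ℝ | |p.1 - A| < ε ∧ Λ < p.2} = 0)
    {β₀ β β' βb : ℝ} (hβ₀ : 0 < β₀) (hβ₀β : β₀ ≤ β) (hββ' : β ≤ β') (hβb : 0 < βb) :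
    primaryPart μ β βb ≤ exp ((β' - β) * (A - ε)) * primaryPart μ β' βb
      + exp (β₀ * Λ) * primaryPart μ β₀ β₀
      + exp (-(β - β₀) * (A + ε)) * primaryPart μ β₀ βb := by
  have hβ : 0 < β := hβ₀.trans_le hβ₀β
  have hlight := (hint β' βb (hβ.trans_le hββ') hβb).const_mul (exp ((β' - β) * (A - ε)))
  have hband := (hint β₀ β₀ hβ₀ hβ₀).const_mul (exp (β₀ * Λ))
  have hheavy := (hint β₀ βb hβ₀ hβb).const_mul (exp (-(β - β₀) * (A + ε)))
  have hlightband : Integrable (fun p : ℝ × ℝ => exp ((β' - β) * (A - ε)) *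
      exp (-β' * p.1 - βb * p.2) + exp (β₀ * Λ) * exp (-β₀ * p.1 - β₀ * p.2)) μ :=
    hlight.add hband
  unfold primaryPart
  rw [← integral_const_mul, ← integral_const_mul, ← integral_const_mul,
    ← integral_add hlight hband, ← integral_add hlightband hheavy]
  refine integral_mono_ae (hint β βb hβ hβb) (hlightband.add hheavy) ?_
  filter_upwards [hpos, measure_eq_zero_iff_ae_notMem.1 hstrip] with p hp hps
  exact exp_le_light_add_band_add_heavy hp.1 hp.2 hps hβ₀.le hβ₀β hββ' hβb.le

lemma dualVacuum_le_light_add_heavy {A ε Λ : ℝ} (hA : 0 < A) {μ : Measure (ℝ × ℝ)}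
    (hpos : ∀ᵐ p ∂μ, 0 < p.1 ∧ 0 < p.2)
    (hint : ∀ β βb : ℝ, 0 < β → 0 < βb →
      Integrable (fun p : ℝ × ℝ => exp (-β * p.1 - βb * p.2)) μ)
    (hmod : ∀ β βb : ℝ, 0 < β → 0 < βb →
      Ztil μ β βb = Kker A β βb * Ztil μ (4 * π ^ 2 / β) (4 * π ^ 2 / βb))
    (hstrip : μ {p : ℝ × ℝ | |p.1 - A| < ε ∧ Λ < p.2} = 0)
    {β₀ β β' : ℝ} (hβ₀ : 0 < β₀) (hβ₀β : β₀ ≤ β) (hββ' : β ≤ β') :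
    dualVacuum A β ≤ exp ((β' - β) * (A - ε)) * dualVacuum A β'
      + exp (-(β - β₀) * (A + ε)) * dualVacuum A β₀ := by
  have hβ : 0 < β := hβ₀.trans_le hβ₀β
  have hpos₂ : ∀ᵐ p ∂μ, 0 < p.2 := hpos.mono fun p hp => hp.2
  have hdom {b : ℝ} (hb : 0 < b) := tendsto_primaryPart_div_kernelFactor hA hpos₂ hint hmod hb
  have hrhs := (((hdom (hβ.trans_le hββ')).const_mul (exp ((β' - β) * (A - ε)))).add
    ((tendsto_const_nhds (x := exp (β₀ * Λ) * primaryPart μ β₀ β₀)).div_atTop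
      (tendsto_kernelFactor_nhdsGT_zero hA))).add
    ((hdom hβ₀).const_mul (exp (-(β - β₀) * (A + ε))))
  have := le_of_tendsto_of_tendsto (hdom hβ) hrhs ?_
  · rwa [add_zero] at this
  filter_upwards [self_mem_nhdsWithin] with βb hβb
  have hk := kernelFactor_pos A hβb
  have hsplit := primaryPart_le_light_add_band_add_heavy
    (hpos.mono fun p hp => ⟨hp.1.le, hp.2.le⟩) hint hstrip (Λ := Λ) hβ₀ hβ₀β hββ' hβb
  calc primaryPart μ β βb / kernelFactor A βb
      ≤ (exp ((β' - β) * (A - ε)) * primaryPart μ β' βb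
          + exp (β₀ * Λ) * primaryPart μ β₀ β₀
          + exp (-(β - β₀) * (A + ε)) * primaryPart μ β₀ βb) / kernelFactor A βb :=
        div_le_div_of_nonneg_right hsplit hk.le
    _ = _ := by ring

lemma dualVacuum_le {A β : ℝ} (hA : 0 ≤ A) (hβ : 1 ≤ β) :
    dualVacuum A β ≤ 2 * π * exp (4 * π ^ 2 * A - A * β) := by
  have hk : kernelFactor A β ≤ exp (4 * π ^ 2 * A - A * β) := by
    calc kernelFactor A β ≤ exp (4 * π ^ 2 * A / β - A * β) :=
          div_le_self (exp_pos _).le (one_le_sqrt.2 hβ)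
      _ ≤ exp (4 * π ^ 2 * A - A * β) := by
          gcongr
          exact div_le_self (by positivity) hβ
  have hvac : 1 - exp (-(4 * π ^ 2 / β)) ≤ 1 := by linarith [exp_pos (-(4 * π ^ 2 / β))]
  have hvac₀ : 0 ≤ 1 - exp (-(4 * π ^ 2 / β)) :=
    sub_nonneg.2 (exp_le_one_iff.2 (neg_nonpos.2 (by positivity)))
  simpa only [dualVacuum, mul_one] using
    mul_le_mul (mul_le_mul_of_nonneg_left hk (by positivity)) hvac hvac₀ (by positivity)

lemma half_le_one_sub_exp_neg {x : ℝ} (hx₀ : 0 ≤ x) (hx₁ : x ≤ 1) : x / 2 ≤ 1 - exp (-x) := by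
  have h : exp (-x) * (1 + x) ≤ 1 := by
    rw [exp_neg, inv_mul_le_iff₀ (exp_pos x), mul_one]
    linarith [add_one_le_exp x]
  nlinarith [exp_pos (-x)]

lemma le_dualVacuum {A β : ℝ} (hA : 0 ≤ A) (hβ : 4 * π ^ 2 ≤ β) :
    4 * π ^ 3 * exp (-(A * β)) / β ^ 2 ≤ dualVacuum A β := by
  have hπ : 1 ≤ 4 * π ^ 2 := by nlinarith [pi_gt_three]
  have hβ₀ : 0 < β := by linarith
  have hk : exp (-(A * β)) / β ≤ kernelFactor A β := by
    unfold kernelFactor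
    gcongr
    · linarith [show 0 ≤ 4 * π ^ 2 * A / β by positivity]
    · exact (sqrt_le_left hβ₀.le).2 (by nlinarith)
  have hvac : 2 * π ^ 2 / β ≤ 1 - exp (-(4 * π ^ 2 / β)) := by
    have := half_le_one_sub_exp_neg (x := 4 * π ^ 2 / β) (by positivity)
      ((div_le_one hβ₀).2 hβ)
    linarith [show 4 * π ^ 2 / β / 2 = 2 * π ^ 2 / β by ring]
  calc 4 * π ^ 3 * exp (-(A * β)) / β ^ 2
      = 2 * π * (exp (-(A * β)) / β) * (2 * π ^ 2 / β) := by ring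
    _ ≤ dualVacuum A β := mul_le_mul (mul_le_mul_of_nonneg_left hk (by positivity)) hvac
        (by positivity) (mul_nonneg (by positivity) (kernelFactor_pos A hβ₀).le)

lemma tendsto_dualVacuum_mul_exp_atTop {A ε : ℝ} (hA : 0 ≤ A) (hε : 0 < ε) :
    Tendsto (fun β => dualVacuum A β * exp ((A + ε) * β)) atTop atTop := by
  have hexp : Tendsto (fun β : ℝ => 4 * π ^ 3 * (exp (ε * β) / β ^ 2)) atTop atTop := by
    refine Tendsto.const_mul_atTop (by positivity) ?_
    simpa only [rpow_two] using tendsto_exp_mul_div_rpow_atTop 2 ε hε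
  refine tendsto_atTop_mono' _ ?_ hexp
  filter_upwards [eventually_ge_atTop (4 * π ^ 2)] with β hβ
  calc 4 * π ^ 3 * (exp (ε * β) / β ^ 2)
      = 4 * π ^ 3 * exp (-(A * β)) / β ^ 2 * exp ((A + ε) * β) := by
        rw [div_mul_eq_mul_div, mul_assoc _ (exp _), ← exp_add]
        ring_nf
    _ ≤ dualVacuum A β * exp ((A + ε) * β) := by gcongr; exact le_dualVacuum hA hβ

theorem measure_strip_pos {A ε : ℝ} (hA : 0 < A) (hε : 0 < ε) (Λ : ℝ) {μ : Measure (ℝ × ℝ)}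
    (hpos : ∀ᵐ p ∂μ, 0 < p.1 ∧ 0 < p.2)
    (hint : ∀ β βb : ℝ, 0 < β → 0 < βb →
      Integrable (fun p : ℝ × ℝ => exp (-β * p.1 - βb * p.2)) μ)
    (hmod : ∀ β βb : ℝ, 0 < β → 0 < βb →
      Ztil μ β βb = Kker A β βb * Ztil μ (4 * π ^ 2 / β) (4 * π ^ 2 / βb)) :
    0 < μ {p : ℝ × ℝ | |p.1 - A| < ε ∧ Λ < p.2} := by
  refine pos_iff_ne_zero.2 fun hstrip => ?_
  set C := 2 * π * exp (4 * π ^ 2 * A) + exp (A + ε) * dualVacuum A 1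
  have hbound : ∀ β ≥ 1, dualVacuum A β * exp ((A + ε) * β) ≤ C := by
    intro β hβ
    have hsplit := dualVacuum_le_light_add_heavy hA hpos hint hmod hstrip one_pos hβ
      (by linarith : β ≤ 2 * β)
    have hlight := dualVacuum_le hA.le (by linarith : 1 ≤ 2 * β)
    have e₁ : exp ((2 * β - β) * (A - ε)) * exp (4 * π ^ 2 * A - A * (2 * β))
        * exp ((A + ε) * β) = exp (4 * π ^ 2 * A) := by
      rw [← exp_add, ← exp_add]; ring_nf
    have e₂ : exp (-(β - 1) * (A + ε)) * exp ((A + ε) * β) = exp (A + ε) := by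
      rw [← exp_add]; ring_nf
    calc dualVacuum A β * exp ((A + ε) * β)
        ≤ (exp ((2 * β - β) * (A - ε)) * (2 * π * exp (4 * π ^ 2 * A - A * (2 * β)))
          + exp (-(β - 1) * (A + ε)) * dualVacuum A 1) * exp ((A + ε) * β) := by
          gcongr
          exact hsplit.trans (by gcongr)
      _ = C := by linear_combination 2 * π * e₁ + dualVacuum A 1 * e₂
  obtain ⟨β, hβC, hβ⟩ :=
    (((tendsto_dualVacuum_mul_exp_atTop hA.le hε).eventually_gt_atTop C).and
      (eventually_ge_atTop 1)).exists
  exact (hbound β hβ).not_gt hβC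

lemma primaryPart_map_prodComm (μ : Measure (ℝ × ℝ)) (β βb : ℝ) :
    primaryPart (μ.map MeasurableEquiv.prodComm) β βb = primaryPart μ βb β := by
  simp only [primaryPart, integral_map_equiv]
  congr 1 with p
  change exp (-β * p.2 - βb * p.1) = _
  ring_nf

lemma Ztil_map_prodComm (μ : Measure (ℝ × ℝ)) (β βb : ℝ) :
    Ztil (μ.map MeasurableEquiv.prodComm) β βb = Ztil μ βb β := by
  rw [Ztil_eq_add_primaryPart, Ztil_eq_add_primaryPart, primaryPart_map_prodComm,
    mul_comm (1 - exp (-β))]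

theorem measure_strip_swap_pos {A ε : ℝ} (hA : 0 < A) (hε : 0 < ε) (Λ : ℝ)
    {μ : Measure (ℝ × ℝ)} (hpos : ∀ᵐ p ∂μ, 0 < p.1 ∧ 0 < p.2)
    (hint : ∀ β βb : ℝ, 0 < β → 0 < βb →
      Integrable (fun p : ℝ × ℝ => exp (-β * p.1 - βb * p.2)) μ)
    (hmod : ∀ β βb : ℝ, 0 < β → 0 < βb →
      Ztil μ β βb = Kker A β βb * Ztil μ (4 * π ^ 2 / β) (4 * π ^ 2 / βb)) :
    0 < μ {p : ℝ × ℝ | Λ < p.1 ∧ |p.2 - A| < ε} := by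
  have hpos' : ∀ᵐ p ∂μ.map MeasurableEquiv.prodComm, 0 < p.1 ∧ 0 < p.2 :=
    MeasurableEquiv.prodComm.measurableEmbedding.ae_map_iff.2 (hpos.mono fun p hp => hp.symm)
  have hint' : ∀ β βb : ℝ, 0 < β → 0 < βb → Integrable (fun p : ℝ × ℝ =>
      exp (-β * p.1 - βb * p.2)) (μ.map MeasurableEquiv.prodComm) := fun β βb hβ hβb =>
    (integrable_map_equiv _ _).2 <| (hint βb β hβb hβ).congr <| .of_forall fun p => by
      change _ = exp (-β * p.2 - βb * p.1)
      ring_nf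
  have hmod' : ∀ β βb : ℝ, 0 < β → 0 < βb → Ztil (μ.map MeasurableEquiv.prodComm) β βb =
      Kker A β βb * Ztil (μ.map MeasurableEquiv.prodComm) (4 * π ^ 2 / β) (4 * π ^ 2 / βb) :=
    fun β βb hβ hβb => by
      rw [Ztil_map_prodComm, Ztil_map_prodComm, hmod βb β hβb hβ, Kker_comm]
  have h := measure_strip_pos hA hε Λ hpos' hint' hmod'
  rw [MeasurableEquiv.map_apply] at h
  convert h using 2
  ext p
  exact and_comm

theorem stmt15_general (A T : ℝ) (hA : 0 < A) (hT : 0 < T) (μ : Measure (ℝ × ℝ))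
    (hsupp : μ {p : ℝ × ℝ | p.1 < T ∨ p.2 < T} = 0)
    (hint : ∀ β βb : ℝ, 0 < β → 0 < βb →
      Integrable (fun p : ℝ × ℝ => Real.exp (-β * p.1 - βb * p.2)) μ)
    (hmod : ∀ β βb : ℝ, 0 < β → 0 < βb →
      Ztil μ β βb = Kker A β βb * Ztil μ (4 * Real.pi ^ 2 / β) (4 * Real.pi ^ 2 / βb))
    (ε : ℝ) (hε : 0 < ε) (Λ : ℝ) :
    0 < μ {p : ℝ × ℝ | |p.1 - A| < ε ∧ Λ < p.2} ∧
      0 < μ {p : ℝ × ℝ | Λ < p.1 ∧ |p.2 - A| < ε} := by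
  have hpos : ∀ᵐ p ∂μ, 0 < p.1 ∧ 0 < p.2 := by
    filter_upwards [measure_eq_zero_iff_ae_notMem.1 hsupp] with p hp
    simp only [not_or, not_lt] at hp
    exact ⟨hT.trans_le hp.1, hT.trans_le hp.2⟩
  exact ⟨measure_strip_pos hA hε Λ hpos hint hmod,
    measure_strip_swap_pos hA hε Λ hpos hint hmod⟩

/-- Theorem 3.1(b), measure-theoretic form: in the modular setup, for
every `ε > 0` and `Λ > 0`, the spectral measure gives positive mass both to
`{|h - A| < ε, h̄ > Λ}` and to `{h > Λ, |h̄ - A| < ε}`. -/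
theorem stmt15 (A T : ℝ) (hA : 0 < A) (hT : 0 < T) (μ : Measure (ℝ × ℝ))
    (hsupp : μ {p : ℝ × ℝ | p.1 < T ∨ p.2 < T} = 0)
    (hint : ∀ β βb : ℝ, 0 < β → 0 < βb →
      Integrable (fun p : ℝ × ℝ => Real.exp (-β * p.1 - βb * p.2)) μ)
    (hmod : ∀ β βb : ℝ, 0 < β → 0 < βb →
      Ztil μ β βb = Kker A β βb * Ztil μ (4 * Real.pi ^ 2 / β) (4 * Real.pi ^ 2 / βb))
    (ε : ℝ) (hε : 0 < ε) (Λ : ℝ) (hΛ : 0 < Λ) :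
    0 < μ {p : ℝ × ℝ | |p.1 - A| < ε ∧ Λ < p.2} ∧
      0 < μ {p : ℝ × ℝ | Λ < p.1 ∧ |p.2 - A| < ε} :=
  stmt15_general A T hA hT μ hsupp hint hmod ε hε Λ
end

section
/- Let A ≥ T > 0, and define K(β, β̄) := (2π/√(β β̄)) · exp(4π²A/β + 4π²A/β̄ − Aβ − Aβ̄) and 𝔟(β, β̄) := β̄ − 4π²A/(Tβ) + (3/(2T))·log β. Then along every sequence (β_n, β̄_n) in (0,∞)² with β_n → 0, β̄_n → ∞ and 𝔟(β_n, β̄_n) → ∞, one has K(β_n, β̄_n) / β_n → 0. -/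
/-
Taking logarithms, `log (K/β) = log 2π + 4π²A/β + 4π²A/β̄ - Aβ - Aβ̄ - (3/2) log β - (1/2) log β̄`.
Once `β̄ ≥ 1`, dropping `-Aβ` and `-(1/2) log β̄` and using `T ≤ A` in `-Aβ̄ ≤ -Tβ̄` leaves
`log (K/β) ≤ log 2π + 4π²A/β̄ - T 𝔟(β, β̄)`, which tends to `-∞` because `𝔟 → ∞` and `β̄ → ∞`.
-/

open Filter

/-- `𝔟(β, β̄) = β̄ - 4π²A/(Tβ) + (3/(2T)) log β`. -/
noncomputable def bfrak (A T β βb : ℝ) : ℝ :=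
  βb - 4 * Real.pi ^ 2 * A / (T * β) + 3 / (2 * T) * Real.log β

open Real

section CrossingKernel

variable {A T β βb : ℝ}

lemma Kker_pos (hβ : 0 < β) (hβb : 0 < βb) : 0 < Kker A β βb := by
  unfold Kker
  positivity

lemma log_Kker_div (hβ : 0 < β) (hβb : 0 < βb) :
    log (Kker A β βb / β) = log (2 * π) + 4 * π ^ 2 * A / β + 4 * π ^ 2 * A / βb
      - A * β - A * βb - 3 / 2 * log β - log βb / 2 := by
  unfold Kker
  rw [log_div (by positivity) hβ.ne', log_mul (by positivity) (exp_pos _).ne', log_div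
    (by positivity) (by positivity), log_exp, log_sqrt (by positivity), log_mul hβ.ne' hβb.ne']
  ring

lemma log_Kker_div_le (hT : 0 < T) (hTA : T ≤ A) (hβ : 0 < β) (hβb : 1 ≤ βb) :
    log (Kker A β βb / β) ≤ log (2 * π) + 4 * π ^ 2 * A / βb - T * bfrak A T β βb := by
  have hTbfrak : T * bfrak A T β βb = T * βb - 4 * π ^ 2 * A / β + 3 / 2 * log β := by
    unfold bfrak
    field_simp
  rw [log_Kker_div hβ (by linarith), hTbfrak]
  have : 0 ≤ A * β := mul_nonneg (hT.le.trans hTA) hβ.le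
  have : T * βb ≤ A * βb := mul_le_mul_of_nonneg_right hTA (by linarith)
  have : 0 ≤ log βb := log_nonneg hβb
  linarith

end CrossingKernel

theorem stmt16_general (A T : ℝ) (hT : 0 < T) (hTA : T ≤ A)
    (β βb : ℕ → ℝ) (hβpos : ∀ n, 0 < β n)
    (hβb : Tendsto βb atTop atTop)
    (hM : Tendsto (fun n => bfrak A T (β n) (βb n)) atTop atTop) :
    Tendsto (fun n => Kker A (β n) (βb n) / β n) atTop (nhds 0) := by
  have hbound : Tendsto (fun n => log (2 * π) + 4 * π ^ 2 * A / βb n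
      - T * bfrak A T (β n) (βb n)) atTop atBot := by
    have hconst : Tendsto (fun n => log (2 * π) + 4 * π ^ 2 * A / βb n) atTop
        (nhds (log (2 * π) + 0)) :=
      tendsto_const_nhds.add (tendsto_const_nhds.div_atTop hβb)
    simpa only [sub_eq_add_neg, Function.comp_def] using
      hconst.add_atBot (tendsto_neg_atTop_atBot.comp (hM.const_mul_atTop hT))
  have hlog : Tendsto (fun n => log (Kker A (β n) (βb n) / β n)) atTop atBot :=
    tendsto_atBot_mono' atTop ((hβb.eventually_ge_atTop 1).mono fun n hn =>
      log_Kker_div_le hT hTA (hβpos n) hn) hbound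
  refine (tendsto_exp_atBot.comp hlog).congr' ((hβb.eventually_gt_atTop 0).mono fun n hn => ?_)
  exact exp_log (div_pos (Kker_pos (hβpos n) hn) (hβpos n))

/-- Eq. (3.26): if `A ≥ T > 0`, then in the M* limit
(`β → 0`, `β̄ → ∞`, `𝔟(β,β̄) → ∞`) one has `K(β, β̄)/β → 0`. -/
theorem stmt16 (A T : ℝ) (hT : 0 < T) (hTA : T ≤ A)
    (β βb : ℕ → ℝ) (hβpos : ∀ n, 0 < β n) (hβbpos : ∀ n, 0 < βb n)
    (hβ0 : Tendsto β atTop (nhds 0)) (hβb : Tendsto βb atTop atTop)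
    (hM : Tendsto (fun n => bfrak A T (β n) (βb n)) atTop atTop) :
    Tendsto (fun n => Kker A (β n) (βb n) / β n) atTop (nhds 0) :=
  stmt16_general A T hT hTA β βb hβpos hβb hM
end

section
/- Under the modular setup below, for every ε > 0 and every β₀ ∈ (0,∞), along every sequence (β_n, β̄_n) with β_n → 0 and β̄_n ≥ β₀ for all n, one has (1/β_n) · K(β_n, β̄_n) · ∫_{ {(h,h̄) : h ≥ A + ε} } e^{ −(4π²/β_n) h − (4π²/β̄_n) h̄ } dμ(h, h̄) → 0. -/
/-!
On `h ≥ A + ε` the weight `e^{-(4π²/β) h}` is at most `e^{-(4π²/β - 1)(A + ε)} e^{-h}`, so the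
tail is bounded by that factor times `Z̃(1, 4π²/β̄)`. Modular invariance turns this into
`K(1, 4π²/β̄) Z̃(4π², β̄)`; the dual partition function is bounded uniformly in `β̄ ≥ β₀` because
`h̄ ≥ 0`, and `K(β, β̄) K(1, 4π²/β̄) = K(β, 1)` no longer depends on `β̄`. What is left is a
constant times `β^{-3/2} e^{-Aβ} e^{-4π²ε/β}`, which tends to `0`.
-/

open MeasureTheory Filter

open Real Topology

theorem setIntegral_fst_ge_exp_le (μ : Measure (ℝ × ℝ)) {a b b' s : ℝ} (hbb : b' ≤ b)
    (hint : Integrable (fun p : ℝ × ℝ => exp (-b' * p.1 - s * p.2)) μ) :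
    ∫ p in {p : ℝ × ℝ | a ≤ p.1}, exp (-b * p.1 - s * p.2) ∂μ ≤
      exp (-(b - b') * a) * ∫ p, exp (-b' * p.1 - s * p.2) ∂μ := by
  have hS : MeasurableSet {p : ℝ × ℝ | a ≤ p.1} := measurableSet_le measurable_const measurable_fst
  rw [← integral_const_mul]
  calc _ ≤ ∫ p in {p : ℝ × ℝ | a ≤ p.1}, exp (-(b - b') * a) * exp (-b' * p.1 - s * p.2) ∂μ := by
        refine integral_mono_of_nonneg (.of_forall fun _ => (exp_pos _).le)
          (hint.const_mul _).integrableOn ?_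
        refine (ae_restrict_mem hS).mono fun p (hp : a ≤ p.1) => ?_
        simp only [← exp_add, exp_le_exp]
        nlinarith
    _ ≤ _ := setIntegral_le_integral (hint.const_mul _) (.of_forall fun _ => by positivity)

theorem integral_exp_le_Ztil (μ : Measure (ℝ × ℝ)) {β βb : ℝ} (hβ : 0 ≤ β) (hβb : 0 ≤ βb) :
    ∫ p, exp (-β * p.1 - βb * p.2) ∂μ ≤ Ztil μ β βb :=
  le_add_of_nonneg_left <| mul_nonneg (by simpa using hβ) (by simpa using hβb)

theorem Ztil_le_one_add_integral (μ : Measure (ℝ × ℝ)) (hsnd : ∀ᵐ p ∂μ, 0 ≤ p.2)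
    {β β₀ βb : ℝ} (hβ : 0 ≤ β) (hβ₀ : 0 ≤ β₀) (hβb : β₀ ≤ βb)
    (hint : Integrable (fun p : ℝ × ℝ => exp (-β * p.1 - β₀ * p.2)) μ) :
    Ztil μ β βb ≤ 1 + ∫ p, exp (-β * p.1 - β₀ * p.2) ∂μ := by
  refine add_le_add ?_ (integral_mono_of_nonneg (.of_forall fun _ => (exp_pos _).le) hint ?_)
  · have h1 : exp (-β) ≤ 1 := exp_le_one_iff.2 (by linarith)
    have h2 : exp (-βb) ≤ 1 := exp_le_one_iff.2 (by linarith)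
    nlinarith [exp_pos (-β), exp_pos (-βb)]
  · filter_upwards [hsnd] with p hp
    rw [exp_le_exp]
    nlinarith

/-- With `K(β, β̄) = 2π k(β) k(β̄)` and `k(x) = x^{-1/2} e^{4π²A/x - Ax}`, one has
`k(x) k(4π²/x) = 1/(2π)`. -/
theorem Kker_mul_Kker_inv_right (A : ℝ) {β β' βb : ℝ} (hβ : 0 < β) (hβ' : 0 < β') (hβb : 0 < βb) :
    Kker A β βb * Kker A β' (4 * π ^ 2 / βb) = Kker A β β' := by
  have hsqrt : √(4 * π ^ 2) = 2 * π := by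
    rw [show 4 * π ^ 2 = (2 * π) ^ 2 by ring, sqrt_sq (by positivity)]
  simp only [Kker]
  rw [sqrt_mul hβ.le, sqrt_mul hβ'.le, sqrt_mul hβ.le, sqrt_div (by positivity), hsqrt]
  have : 0 < √β := sqrt_pos.2 hβ
  have : 0 < √β' := sqrt_pos.2 hβ'
  have : 0 < √βb := sqrt_pos.2 hβb
  rw [mul_mul_mul_comm, ← exp_add]
  congr 1
  · field_simp
  · congr 1; field_simp; ring

theorem Kker_nonneg (A β βb : ℝ) : 0 ≤ Kker A β βb := by
  unfold Kker; positivity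

theorem tendsto_one_div_mul_Kker_mul_exp {A c : ℝ} (hc : A < c) :
    Tendsto (fun β => 1 / β * Kker A β 1 * exp (-(4 * π ^ 2 / β - 1) * c)) (𝓝[>] 0) (𝓝 0) := by
  have hc' : 0 < 4 * π ^ 2 * (c - A) := mul_pos (by positivity) (sub_pos.2 hc)
  have hpow : Tendsto (fun β : ℝ => β⁻¹ ^ (3 / 2 : ℝ) * exp (-(4 * π ^ 2 * (c - A)) * β⁻¹))
      (𝓝[>] 0) (𝓝 0) :=
    (tendsto_rpow_mul_exp_neg_mul_atTop_nhds_zero _ _ hc').comp tendsto_inv_nhdsGT_zero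
  have hexp : Tendsto (fun β : ℝ => exp (-A * β)) (𝓝[>] 0) (𝓝 1) := by
    have h : Continuous fun β : ℝ => exp (-A * β) := by fun_prop
    simpa using (h.tendsto 0).mono_left nhdsWithin_le_nhds
  have hprod := (hexp.mul hpow).const_mul (2 * π * exp (4 * π ^ 2 * A - A + c))
  rw [mul_zero, mul_zero] at hprod
  refine hprod.congr' (eventually_nhdsWithin_of_forall fun β (hβ : 0 < β) => ?_)
  have hpow_eq : β⁻¹ ^ (3 / 2 : ℝ) = β⁻¹ * (√β)⁻¹ := by
    rw [show (3 / 2 : ℝ) = 1 + 1 / 2 by norm_num, rpow_add (inv_pos.2 hβ), rpow_one,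
      ← sqrt_eq_rpow, sqrt_inv]
  simp only [hpow_eq, Kker, mul_one, div_one]
  have : 0 < √β := sqrt_pos.2 hβ
  field_simp
  rw [mul_assoc, mul_assoc, ← exp_add, ← exp_add, ← exp_add]
  congr 1
  field_simp
  ring

theorem one_div_mul_Kker_mul_setIntegral_le {A : ℝ} {μ : Measure (ℝ × ℝ)}
    (hint : ∀ β βb : ℝ, 0 < β → 0 < βb →
      Integrable (fun p : ℝ × ℝ => exp (-β * p.1 - βb * p.2)) μ)
    (hmod : ∀ β βb : ℝ, 0 < β → 0 < βb →
      Ztil μ β βb = Kker A β βb * Ztil μ (4 * π ^ 2 / β) (4 * π ^ 2 / βb))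
    (hsnd : ∀ᵐ p ∂μ, 0 ≤ p.2) (a : ℝ) {β βb β₀ : ℝ}
    (hβ : 0 < β) (hβ4π : β ≤ 4 * π ^ 2) (hβ₀ : 0 < β₀) (hβb : β₀ ≤ βb) :
    1 / β * Kker A β βb *
        ∫ p in {p : ℝ × ℝ | a ≤ p.1}, exp (-(4 * π ^ 2 / β) * p.1 - (4 * π ^ 2 / βb) * p.2) ∂μ ≤
      1 / β * Kker A β 1 * exp (-(4 * π ^ 2 / β - 1) * a) *
        (1 + ∫ p, exp (-(4 * π ^ 2) * p.1 - β₀ * p.2) ∂μ) := by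
  have hβb' : 0 < βb := hβ₀.trans_le hβb
  set s := 4 * π ^ 2 / βb
  have hs : 0 < s := by positivity
  have hdual : Ztil μ 1 s = Kker A 1 s * Ztil μ (4 * π ^ 2) βb := by
    rw [hmod 1 s one_pos hs, div_one, div_div_cancel₀ (by positivity)]
  have htail := setIntegral_fst_ge_exp_le μ (a := a)
    ((one_le_div₀ hβ).2 hβ4π) (hint 1 s one_pos hs)
  have hfull : ∫ p, exp (-1 * p.1 - s * p.2) ∂μ ≤
      Kker A 1 s * (1 + ∫ p, exp (-(4 * π ^ 2) * p.1 - β₀ * p.2) ∂μ) :=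
    (integral_exp_le_Ztil μ zero_le_one hs.le).trans <| hdual.trans_le <|
      mul_le_mul_of_nonneg_left (Ztil_le_one_add_integral μ hsnd (by positivity) hβ₀.le hβb
        (hint _ _ (by positivity) hβ₀)) (Kker_nonneg _ _ _)
  calc _ ≤ 1 / β * Kker A β βb * (exp (-(4 * π ^ 2 / β - 1) * a) *
        (Kker A 1 s * (1 + ∫ p, exp (-(4 * π ^ 2) * p.1 - β₀ * p.2) ∂μ))) := by
        have := Kker_nonneg A β βb
        gcongr
        exact htail.trans (by gcongr)
    _ = 1 / β * (Kker A β βb * Kker A 1 s) * exp (-(4 * π ^ 2 / β - 1) * a) *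
        (1 + ∫ p, exp (-(4 * π ^ 2) * p.1 - β₀ * p.2) ∂μ) := by ring
    _ = _ := by rw [Kker_mul_Kker_inv_right A hβ one_pos hβb']

theorem stmt17_general (A T : ℝ) (hT : 0 < T) (μ : Measure (ℝ × ℝ))
    (hsupp : μ {p : ℝ × ℝ | p.1 < T ∨ p.2 < T} = 0)
    (hint : ∀ β βb : ℝ, 0 < β → 0 < βb →
      Integrable (fun p : ℝ × ℝ => Real.exp (-β * p.1 - βb * p.2)) μ)
    (hmod : ∀ β βb : ℝ, 0 < β → 0 < βb →
      Ztil μ β βb = Kker A β βb * Ztil μ (4 * Real.pi ^ 2 / β) (4 * Real.pi ^ 2 / βb))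
    (ε : ℝ) (hε : 0 < ε) (β₀ : ℝ) (hβ₀ : 0 < β₀)
    (β βb : ℕ → ℝ) (hβpos : ∀ n, 0 < β n) (hβb : ∀ n, β₀ ≤ βb n)
    (hβ0 : Tendsto β atTop (nhds 0)) :
    Tendsto
      (fun n => (1 / β n) * Kker A (β n) (βb n) *
        ∫ p in {p : ℝ × ℝ | A + ε ≤ p.1},
          Real.exp (-(4 * Real.pi ^ 2 / β n) * p.1 - (4 * Real.pi ^ 2 / βb n) * p.2) ∂μ)
      atTop (nhds 0) := by
  have hsnd : ∀ᵐ p ∂μ, 0 ≤ p.2 :=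
    ae_iff.2 <| measure_mono_null (fun p (hp : ¬ 0 ≤ p.2) => Or.inr (by linarith)) hsupp
  have hβ0' : Tendsto β atTop (𝓝[>] 0) := tendsto_nhdsWithin_iff.2 ⟨hβ0, .of_forall hβpos⟩
  have hbound := ((tendsto_one_div_mul_Kker_mul_exp (A := A) (by linarith : A < A + ε)).comp
    hβ0').mul_const (1 + ∫ p, exp (-(4 * π ^ 2) * p.1 - β₀ * p.2) ∂μ)
  rw [zero_mul] at hbound
  refine squeeze_zero' (.of_forall fun n => ?_) ?_ hbound
  · exact mul_nonneg (mul_nonneg (one_div_nonneg.2 (hβpos n).le) (Kker_nonneg _ _ _))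
      (integral_nonneg fun _ => (exp_pos _).le)
  · filter_upwards [hβ0.eventually (eventually_le_nhds (by positivity : (0 : ℝ) < 4 * π ^ 2))]
      with n hn
    exact one_div_mul_Kker_mul_setIntegral_le hint hmod hsnd _ (hβpos n) hn hβ₀ (hβb n)

/-- crossed-channel high-`h` estimate, Section 3.2.5: for every `ε > 0`
and `β₀ > 0`, along sequences with `β_n → 0` and `β̄_n ≥ β₀`, the crossed-channel
contribution of `h ≥ A + ε` is `o(β)`. -/
theorem stmt17 (A T : ℝ) (hA : 0 < A) (hT : 0 < T) (μ : Measure (ℝ × ℝ))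
    (hsupp : μ {p : ℝ × ℝ | p.1 < T ∨ p.2 < T} = 0)
    (hint : ∀ β βb : ℝ, 0 < β → 0 < βb →
      Integrable (fun p : ℝ × ℝ => Real.exp (-β * p.1 - βb * p.2)) μ)
    (hmod : ∀ β βb : ℝ, 0 < β → 0 < βb →
      Ztil μ β βb = Kker A β βb * Ztil μ (4 * Real.pi ^ 2 / β) (4 * Real.pi ^ 2 / βb))
    (ε : ℝ) (hε : 0 < ε) (β₀ : ℝ) (hβ₀ : 0 < β₀)
    (β βb : ℕ → ℝ) (hβpos : ∀ n, 0 < β n) (hβb : ∀ n, β₀ ≤ βb n)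
    (hβ0 : Tendsto β atTop (nhds 0)) :
    Tendsto
      (fun n => (1 / β n) * Kker A (β n) (βb n) *
        ∫ p in {p : ℝ × ℝ | A + ε ≤ p.1},
          Real.exp (-(4 * Real.pi ^ 2 / β n) * p.1 - (4 * Real.pi ^ 2 / βb n) * p.2) ∂μ)
      atTop (nhds 0) :=
  stmt17_general A T hT μ hsupp hint hmod ε hε β₀ hβ₀ β βb hβpos hβb hβ0
end

section
/- Under the modular setup below, for every Λ > 0, along every sequence (β_n, β̄_n) in (0,∞)² tending to the M* limit (i.e. β_n → 0, β̄_n → ∞, 𝔟(β_n, β̄_n) → ∞), one has (1/β_n) · K(β_n, β̄_n) · ∫_{ {(h,h̄) : h ≤ Λ and h̄ ≤ Λ} } e^{ −(4π²/β_n) h − (4π²/β̄_n) h̄ } dμ(h, h̄) → 0. -/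
open MeasureTheory Filter

/-!
The states with `h, h̄ ≤ Λ` have finite total mass (Markov's inequality for the integrable
`e^{-h-h̄}`), and since `h ≥ T` almost everywhere each of them contributes at most
`e^{-4π²T/β}`. So the crossed-channel contribution is at most a constant times
`β⁻¹ K(β, β̄) e^{-4π²T/β}`, whose logarithm is, up to `log 2π`,
`-A 𝔟 - 4π²(T - A + A²/T)/β + (3A/(2T) - 3/2) log β - (1/2) log β̄ + 4π²A/β̄ - Aβ`.
As `T² - AT + A² > 0`, the `1/β` term beats the logarithm when `β → 0`, and `-A 𝔟 → -∞`
is the definition of the M* limit.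
-/

open Real Set Topology

lemma measure_box_lt_top {μ : Measure (ℝ × ℝ)}
    (hint : Integrable (fun p : ℝ × ℝ => exp (-p.1 - p.2)) μ) (Λ : ℝ) :
    μ {p : ℝ × ℝ | p.1 ≤ Λ ∧ p.2 ≤ Λ} < ⊤ := by
  refine (measure_mono fun p hp => ?_).trans_lt (hint.measure_ge_lt_top (exp_pos (-2 * Λ)))
  simp only [mem_ofPred_eq, exp_le_exp] at hp ⊢
  linarith [hp.1, hp.2]

lemma setIntegral_exp_le {μ : Measure (ℝ × ℝ)} {s : Set (ℝ × ℝ)} (hs : μ s < ⊤)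
    {T a b : ℝ} (ha : 0 ≤ a) (hb : 0 ≤ b) (hsupp : ∀ᵐ p ∂μ, T ≤ p.1 ∧ 0 ≤ p.2) :
    ∫ p in s, exp (-a * p.1 - b * p.2) ∂μ ≤ exp (-a * T) * μ.real s := by
  refine (Real.le_norm_self _).trans (norm_setIntegral_le_of_norm_le_const_ae' hs ?_)
  filter_upwards [hsupp] with p ⟨h1, h2⟩ _
  rw [Real.norm_of_nonneg (exp_pos _).le, exp_le_exp]
  nlinarith

lemma one_div_mul_Kker_mul_exp_eq (A T : ℝ) {β βb : ℝ} (hβ : 0 < β) (hβb : 0 < βb) :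
    1 / β * Kker A β βb * exp (-(4 * π ^ 2 / β) * T) =
      2 * π * exp (4 * π ^ 2 * (A - T) / β + 4 * π ^ 2 * A / βb - A * β - A * βb
        - 3 / 2 * log β - 1 / 2 * log βb) := by
  obtain ⟨u, rfl⟩ : ∃ u, exp u = β := ⟨log β, exp_log hβ⟩
  obtain ⟨v, rfl⟩ : ∃ v, exp v = βb := ⟨log βb, exp_log hβb⟩
  have hsqrt : √(exp u * exp v) = exp ((u + v) / 2) := by
    rw [← exp_add, sqrt_eq_rpow, rpow_def_of_pos (exp_pos _), log_exp]
    ring_nf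
  rw [Kker, hsqrt, log_exp, log_exp, one_div, div_eq_mul_inv, ← exp_neg, ← exp_neg,
    show 4 * π ^ 2 * (A - T) / exp u + 4 * π ^ 2 * A / exp v - A * exp u - A * exp v
        - 3 / 2 * u - 1 / 2 * v
      = -u + -((u + v) / 2) + (4 * π ^ 2 * A / exp u + 4 * π ^ 2 * A / exp v - A * exp u
        - A * exp v) + -(4 * π ^ 2 / exp u) * T by ring]
  simp only [exp_add]
  ring

lemma tendsto_neg_div_add_mul_log_nhdsGT_zero {c : ℝ} (hc : 0 < c) (k : ℝ) :
    Tendsto (fun x => -c / x + k * log x) (𝓝[>] 0) atBot := by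
  have hlog : Tendsto (fun x => -c + k * (log x * x)) (𝓝[>] 0) (𝓝 (-c)) := by
    simpa using ((tendsto_log_mul_rpow_nhdsGT_zero one_pos).const_mul k).const_add (-c)
  refine (tendsto_inv_nhdsGT_zero.atTop_mul_neg (neg_neg_of_pos hc) hlog).congr' ?_
  filter_upwards [self_mem_nhdsWithin] with x (hx : 0 < x)
  field_simp

lemma tendsto_neg_mul_log_add_div_atTop {a : ℝ} (ha : 0 < a) (b : ℝ) :
    Tendsto (fun x => -a * log x + b / x) atTop atBot :=
  (tendsto_log_atTop.const_mul_atTop_of_neg (neg_neg_of_pos ha)).atBot_add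
    (tendsto_const_nhds.div_atTop tendsto_id)

section MStarLimit

variable {ι : Type*} {l : Filter ι} {A T : ℝ} {β βb : ι → ℝ}

lemma tendsto_exponent_atBot (hA : 0 < A) (hT : 0 < T) (hβ : Tendsto β l (𝓝[>] 0))
    (hβb : Tendsto βb l atTop) (hM : Tendsto (fun i => bfrak A T (β i) (βb i)) l atTop) :
    Tendsto (fun i => 4 * π ^ 2 * (A - T) / β i + 4 * π ^ 2 * A / βb i - A * β i - A * βb i
        - 3 / 2 * log (β i) - 1 / 2 * log (βb i)) l atBot := by
  have hc : 0 < 4 * π ^ 2 * (T - A + A ^ 2 / T) := by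
    have : T - A + A ^ 2 / T = ((T - A / 2) ^ 2 + 3 / 4 * A ^ 2) / T := by
      field_simp
      ring
    rw [this]
    positivity
  have hsmall := (tendsto_neg_div_add_mul_log_nhdsGT_zero hc (3 * A / (2 * T) - 3 / 2)).comp hβ
  have hlarge := (tendsto_neg_mul_log_add_div_atTop one_half_pos (4 * π ^ 2 * A)).comp hβb
  have hbfrak := hM.const_mul_atTop_of_neg (neg_neg_of_pos hA)
  have hβA : Tendsto (fun i => -A * β i) l (𝓝 0) := by
    simpa using (hβ.mono_right nhdsWithin_le_nhds).const_mul (-A)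
  refine (((hsmall.atBot_add_atBot hlarge).atBot_add_atBot hbfrak).atBot_add hβA).congr' ?_
  filter_upwards [hβ.eventually self_mem_nhdsWithin] with i (hi : 0 < β i)
  simp only [Function.comp, bfrak]
  field_simp
  ring

lemma tendsto_one_div_mul_Kker_mul_exp_s19 (hA : 0 < A) (hT : 0 < T) (hβ : Tendsto β l (𝓝[>] 0))
    (hβb : Tendsto βb l atTop) (hM : Tendsto (fun i => bfrak A T (β i) (βb i)) l atTop) :
    Tendsto (fun i => 1 / β i * Kker A (β i) (βb i) * exp (-(4 * π ^ 2 / β i) * T)) l (𝓝 0) := by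
  have h := (tendsto_exp_atBot.comp (tendsto_exponent_atBot hA hT hβ hβb hM)).const_mul (2 * π)
  rw [mul_zero] at h
  refine h.congr' ?_
  filter_upwards [hβ.eventually self_mem_nhdsWithin, hβb.eventually_gt_atTop 0] with i hi hib
  exact (one_div_mul_Kker_mul_exp_eq A T hi hib).symm

end MStarLimit

theorem stmt19_general (A T : ℝ) (hA : 0 < A) (hT : 0 < T) (μ : Measure (ℝ × ℝ))
    (hsupp : μ {p : ℝ × ℝ | p.1 < T ∨ p.2 < T} = 0)
    (hint : ∀ β βb : ℝ, 0 < β → 0 < βb →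
      Integrable (fun p : ℝ × ℝ => Real.exp (-β * p.1 - βb * p.2)) μ)
    (Λ : ℝ)
    (β βb : ℕ → ℝ) (hβpos : ∀ n, 0 < β n) (hβbpos : ∀ n, 0 < βb n)
    (hβ0 : Tendsto β atTop (nhds 0)) (hβb : Tendsto βb atTop atTop)
    (hM : Tendsto (fun n => bfrak A T (β n) (βb n)) atTop atTop) :
    Tendsto
      (fun n => (1 / β n) * Kker A (β n) (βb n) *
        ∫ p in {p : ℝ × ℝ | p.1 ≤ Λ ∧ p.2 ≤ Λ},
          Real.exp (-(4 * Real.pi ^ 2 / β n) * p.1 - (4 * Real.pi ^ 2 / βb n) * p.2) ∂μ)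
      atTop (nhds 0) := by
  set S := {p : ℝ × ℝ | p.1 ≤ Λ ∧ p.2 ≤ Λ}
  have hS : μ S < ⊤ := measure_box_lt_top (by simpa using hint 1 1 one_pos one_pos) Λ
  have hae : ∀ᵐ p ∂μ, T ≤ p.1 ∧ 0 ≤ p.2 := by
    refine ae_iff.2 (measure_mono_null (fun p hp => ?_) hsupp)
    simp only [mem_ofPred_eq, not_and_or, not_le] at hp ⊢
    exact hp.imp_right fun h => h.trans hT
  have hβ : Tendsto β atTop (𝓝[>] 0) := tendsto_nhdsWithin_iff.2 ⟨hβ0, .of_forall hβpos⟩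
  have hpref := (tendsto_one_div_mul_Kker_mul_exp_s19 hA hT hβ hβb hM).mul_const (μ.real S)
  rw [zero_mul] at hpref
  have hK : ∀ n, 0 ≤ 1 / β n * Kker A (β n) (βb n) := fun n => by
    have := (hβpos n).le
    unfold Kker
    positivity
  refine squeeze_zero (fun n => mul_nonneg (hK n) (integral_nonneg fun p => (exp_pos _).le))
    (fun n => ?_) hpref
  rw [mul_assoc _ (exp _)]
  have hβn := (hβpos n).le
  have hβbn := (hβbpos n).le
  exact mul_le_mul_of_nonneg_left (setIntegral_exp_le hS (by positivity) (by positivity) hae) (hK n)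

/-- Lemma 3.5: for every `Λ > 0`, along sequences in the M* limit
(`β → 0`, `β̄ → ∞`, `𝔟 → ∞`), the crossed-channel contribution of all states with
`h, h̄ ≤ Λ` is `o(β)`; valid for discrete and continuous spectra. -/
theorem stmt19 (A T : ℝ) (hA : 0 < A) (hT : 0 < T) (μ : Measure (ℝ × ℝ))
    (hsupp : μ {p : ℝ × ℝ | p.1 < T ∨ p.2 < T} = 0)
    (hint : ∀ β βb : ℝ, 0 < β → 0 < βb →
      Integrable (fun p : ℝ × ℝ => Real.exp (-β * p.1 - βb * p.2)) μ)
    (hmod : ∀ β βb : ℝ, 0 < β → 0 < βb →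
      Ztil μ β βb = Kker A β βb * Ztil μ (4 * Real.pi ^ 2 / β) (4 * Real.pi ^ 2 / βb))
    (Λ : ℝ) (hΛ : 0 < Λ)
    (β βb : ℕ → ℝ) (hβpos : ∀ n, 0 < β n) (hβbpos : ∀ n, 0 < βb n)
    (hβ0 : Tendsto β atTop (nhds 0)) (hβb : Tendsto βb atTop atTop)
    (hM : Tendsto (fun n => bfrak A T (β n) (βb n)) atTop atTop) :
    Tendsto
      (fun n => (1 / β n) * Kker A (β n) (βb n) *
        ∫ p in {p : ℝ × ℝ | p.1 ≤ Λ ∧ p.2 ≤ Λ},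
          Real.exp (-(4 * Real.pi ^ 2 / β n) * p.1 - (4 * Real.pi ^ 2 / βb n) * p.2) ∂μ)
      atTop (nhds 0) :=
  stmt19_general A T hA hT μ hsupp hint Λ β βb hβpos hβbpos hβ0 hβb hM
end
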